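/- Let M(z) = 1 + Σ_{n≥1} μ_n z^n be a formal power series over a commutative Q-algebra, and let C(z) = 1 + Σ_{n≥1} c_n z^n be the unique formal power series satisfying C(zM(z)) = M(z). Define μ_n as the sum over Łukasiewicz paths of length n with weight 1 on rising steps and c_{k+1} on steps falling by k ≥ 0. Then the coefficients of M are exactly these weighted sums: μ_n = Σ_{π ∈ L_n} v(π) for all n ≥ 1. -/

import Mathlib

open PowerSeries

/-- Łukasiewicz paths of length `n` as height sequences with values in `Fin (n+1)`. -/
def lukasiewiczSet (n : ℕ) : Finset (Fin (n + 1) → Fin (n + 1)) :=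
  Finset.univ.filter (fun f => f 0 = 0 ∧ f (Fin.last n) = 0 ∧
    ∀ i : Fin n, (f i.succ : ℕ) ≤ (f i.castSucc : ℕ) + 1)

/-- Valuation: rising step `1`, step falling by `k ≥ 0` has weight `c (k+1)`. -/
def lukasiewiczVal {R : Type*} [CommRing R] (c : ℕ → R) {n : ℕ}
    (f : Fin (n + 1) → Fin (n + 1)) : R :=
  ∏ i : Fin n,
    if (f i.succ : ℕ) = (f i.castSucc : ℕ) + 1 then 1
    else c ((f i.castSucc : ℕ) - (f i.succ : ℕ) + 1)

section Aux

variable {R : Type*} [CommRing R]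

/-- Weight of a single step from height `a` to height `h`. -/
def stepW (c : ℕ → R) (a h : ℕ) : R :=
  if h ≤ a + 1 then (if h = a + 1 then 1 else c (a - h + 1)) else 0

/-- Weighted count of nonnegative paths of length `n` from `0` to height `h`
(steps rise by at most one), computed by peeling the last step. -/
def Bfun (c : ℕ → R) : ℕ → ℕ → R
  | 0, h => if h = 0 then 1 else 0
  | n+1, h => ∑ a ∈ Finset.range (n+1), stepW c a h * Bfun c n a

/-- Paths of length `n` from `0` to height `h`. -/
def pathSet (n h : ℕ) : Finset (Fin (n + 1) → Fin (n + 1)) :=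
  Finset.univ.filter (fun f => f 0 = 0 ∧ ((f (Fin.last n) : ℕ) = h) ∧
    ∀ i : Fin n, (f i.succ : ℕ) ≤ (f i.castSucc : ℕ) + 1)

lemma path_height_le {n h : ℕ} {f : Fin (n + 1) → Fin (n + 1)} (hf : f ∈ pathSet n h) :
    ∀ i : Fin (n + 1), (f i : ℕ) ≤ (i : ℕ) := by
  rw [pathSet, Finset.mem_filter] at hf
  obtain ⟨-, h0, -, hstep⟩ := hf
  intro i
  induction i using Fin.induction with
  | zero => simp [h0]
  | succ i ih =>
    have := hstep i
    have h2 : ((i.castSucc : Fin (n+1)) : ℕ) = (i : ℕ) := rfl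
    have h3 : ((i.succ : Fin (n+1)) : ℕ) = (i : ℕ) + 1 := rfl
    omega

lemma pathSum (c : ℕ → R) : ∀ n h, (∑ f ∈ pathSet n h, lukasiewiczVal c f) = Bfun c n h := by
  intro n
  induction n with
  | zero =>
    intro h
    have huniv : (Finset.univ : Finset (Fin 1 → Fin 1)) = {fun _ => 0} :=
      Finset.eq_singleton_iff_unique_mem.mpr
        ⟨Finset.mem_univ _, fun f _ => funext fun i => Subsingleton.elim _ _⟩
    rw [pathSet, huniv, Finset.sum_filter, Finset.sum_singleton]
    have hval : lukasiewiczVal c (fun _ : Fin 1 => (0 : Fin 1)) = 1 := by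
      simp [lukasiewiczVal]
    by_cases hh : h = 0
    · subst hh
      rw [if_pos ⟨rfl, rfl, fun i => i.elim0⟩, hval]
      simp [Bfun]
    · rw [if_neg (fun hp => hh hp.2.1.symm)]
      simp [Bfun, hh]
  | succ n ihn =>
    intro h
    by_cases hh : h ≤ n + 1
    · have hle : ∀ (f : Fin (n+2) → Fin (n+2)), f ∈ pathSet (n+1) h →
          ∀ j : Fin (n+1), (f j.castSucc : ℕ) ≤ n := by
        intro f hf j
        have h1 := path_height_le hf j.castSucc
        have h2 : ((j.castSucc : Fin (n+2)) : ℕ) = (j : ℕ) := rfl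
        have h3 := j.isLt
        omega
      have hmain : (∑ f ∈ pathSet (n+1) h, lukasiewiczVal c f)
          = ∑ x ∈ ((Finset.range (n+1)).filter (fun a => h ≤ a + 1)).sigma
              (fun a => pathSet n a),
              stepW c x.1 h * lukasiewiczVal c x.2 := by
        apply Finset.sum_nbij'
          (i := fun f => (⟨min ((f (Fin.last n).castSucc : ℕ)) n,
            fun j => ⟨min ((f j.castSucc : ℕ)) n, by omega⟩⟩ :
              (_ : ℕ) × (Fin (n+1) → Fin (n+1))))
          (j := fun x => Fin.snoc (fun j => (x.2 j).castSucc) (⟨h, by omega⟩ : Fin (n+2)))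
        -- hi
        · intro f hf
          have hf' := hf
          rw [pathSet, Finset.mem_filter] at hf'
          obtain ⟨-, hf0, hfl, hfs⟩ := hf'
          rw [Finset.mem_sigma, Finset.mem_filter, Finset.mem_range]
          have ha : min ((f (Fin.last n).castSucc : ℕ)) n = (f (Fin.last n).castSucc : ℕ) :=
            Nat.min_eq_left (hle f hf _)
          refine ⟨⟨by dsimp only; omega, ?_⟩, ?_⟩
          · dsimp only
            have h1 := hfs (Fin.last n)
            have h1' : (f (Fin.last (n+1)) : ℕ) ≤ (f (Fin.last n).castSucc : ℕ) + 1 := by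
              rw [Fin.succ_last] at h1; exact h1
            omega
          · rw [pathSet, Finset.mem_filter]
            refine ⟨Finset.mem_univ _, ?_, rfl, ?_⟩
            · apply Fin.ext
              show min ((f (0 : Fin (n+1)).castSucc : ℕ)) n = 0
              rw [Fin.castSucc_zero, hf0]
              simp
            · intro i
              show min ((f i.succ.castSucc : ℕ)) n ≤ min ((f i.castSucc.castSucc : ℕ)) n + 1
              have h1 := hfs i.castSucc
              rw [Fin.succ_castSucc] at h1
              have h2 := hle f hf i.succ
              have h3 := hle f hf i.castSucc
              omega
        -- hj
        · rintro ⟨a, g⟩ hx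
          rw [Finset.mem_sigma, Finset.mem_filter, Finset.mem_range] at hx
          dsimp only at hx ⊢
          obtain ⟨⟨han, hah⟩, hg⟩ := hx
          have hg' := hg
          rw [pathSet, Finset.mem_filter] at hg'
          obtain ⟨-, hg0, hgl, hgs⟩ := hg'
          rw [pathSet, Finset.mem_filter]
          refine ⟨Finset.mem_univ _, ?_, ?_, ?_⟩
          · have h0 : ((0 : Fin (n+2))) = (0 : Fin (n+1)).castSucc := by simp
            rw [h0, Fin.snoc_castSucc, hg0]
          · rw [Fin.snoc_last]
          · intro i
            induction i using Fin.lastCases with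
            | last =>
              rw [Fin.succ_last, Fin.snoc_last, Fin.snoc_castSucc]
              show h ≤ ((g (Fin.last n)).castSucc : ℕ) + 1
              rw [Fin.coe_castSucc, hgl]
              exact hah
            | cast i' =>
              rw [Fin.succ_castSucc, Fin.snoc_castSucc, Fin.snoc_castSucc]
              show ((g i'.succ).castSucc : ℕ) ≤ ((g i'.castSucc).castSucc : ℕ) + 1
              rw [Fin.coe_castSucc, Fin.coe_castSucc]
              exact hgs i'
        -- left inverse
        · intro f hf
          have hf' := hf
          rw [pathSet, Finset.mem_filter] at hf'
          obtain ⟨-, hf0, hfl, hfs⟩ := hf'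
          funext k
          induction k using Fin.lastCases with
          | last =>
            rw [Fin.snoc_last]
            apply Fin.ext
            exact hfl.symm
          | cast k' =>
            rw [Fin.snoc_castSucc]
            apply Fin.ext
            show min ((f k'.castSucc : ℕ)) n = (f k'.castSucc : ℕ)
            exact Nat.min_eq_left (hle f hf k')
        -- right inverse
        · rintro ⟨a, g⟩ hx
          rw [Finset.mem_sigma, Finset.mem_filter, Finset.mem_range] at hx
          dsimp only at hx ⊢
          obtain ⟨⟨han, -⟩, hg⟩ := hx
          have hg' := hg
          rw [pathSet, Finset.mem_filter] at hg'
          obtain ⟨-, hg0, hgl, hgs⟩ := hg'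
          apply Sigma.ext
          · dsimp only
            rw [Fin.snoc_castSucc, Fin.coe_castSucc, hgl]
            omega
          · apply heq_of_eq
            funext k
            apply Fin.ext
            dsimp only
            rw [Fin.snoc_castSucc, Fin.coe_castSucc]
            have := (g k).isLt
            omega
        -- values
        · intro f hf
          have hf' := hf
          rw [pathSet, Finset.mem_filter] at hf'
          obtain ⟨-, hf0, hfl, hfs⟩ := hf'
          rw [lukasiewiczVal, Fin.prod_univ_castSucc, mul_comm]
          congr 1
          · have hfl' : (f ((Fin.last n).succ) : ℕ) = h := by rw [Fin.succ_last]; exact hfl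
            have ha : min ((f (Fin.last n).castSucc : ℕ)) n = (f (Fin.last n).castSucc : ℕ) :=
              Nat.min_eq_left (hle f hf _)
            have hcond : h ≤ (f (Fin.last n).castSucc : ℕ) + 1 := by
              rw [← hfl']; exact hfs (Fin.last n)
            dsimp only
            rw [hfl']
            simp only [ha]
            rw [stepW, if_pos hcond]
          · rw [lukasiewiczVal]
            apply Finset.prod_congr rfl
            intro i' _
            have e1 : min ((f i'.succ.castSucc : ℕ)) n = (f i'.succ.castSucc : ℕ) :=
              Nat.min_eq_left (hle f hf _)
            have e2 : min ((f i'.castSucc.castSucc : ℕ)) n = (f i'.castSucc.castSucc : ℕ) :=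
              Nat.min_eq_left (hle f hf _)
            show (if ((f i'.castSucc.succ : ℕ)) = ((f i'.castSucc.castSucc : ℕ)) + 1 then 1
                else c (((f i'.castSucc.castSucc : ℕ)) - ((f i'.castSucc.succ : ℕ)) + 1))
              = (if (min ((f i'.succ.castSucc : ℕ)) n) = (min ((f i'.castSucc.castSucc : ℕ)) n) + 1 then 1
                else c ((min ((f i'.castSucc.castSucc : ℕ)) n) - (min ((f i'.succ.castSucc : ℕ)) n) + 1))
            rw [e1, e2, Fin.succ_castSucc]
      rw [hmain, Finset.sum_sigma]
      have hconj : ∀ a ∈ (Finset.range (n+1)).filter (fun a => h ≤ a + 1),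
          (∑ g ∈ pathSet n a, stepW c a h * lukasiewiczVal c g) = stepW c a h * Bfun c n a := by
        intro a _
        rw [← Finset.mul_sum, ihn a]
      rw [Finset.sum_congr rfl hconj, Finset.sum_filter]
      show _ = Bfun c (n+1) h
      conv_rhs => rw [Bfun]
      apply Finset.sum_congr rfl
      intro a _
      by_cases hc : h ≤ a + 1
      · rw [if_pos hc]
      · rw [if_neg hc, stepW, if_neg hc, zero_mul]
    · have hL : (∑ f ∈ pathSet (n+1) h, lukasiewiczVal c f) = 0 := by
        apply Finset.sum_eq_zero
        intro f hf
        rw [pathSet, Finset.mem_filter] at hf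
        obtain ⟨-, -, hfl, -⟩ := hf
        have := (f (Fin.last (n+1))).isLt
        omega
      rw [hL]
      symm
      show (∑ a ∈ Finset.range (n+1), stepW c a h * Bfun c n a) = 0
      apply Finset.sum_eq_zero
      intro a ha
      rw [Finset.mem_range] at ha
      rw [stepW, if_neg (by omega), zero_mul]

noncomputable def LSer (c : ℕ → R) : PowerSeries R := PowerSeries.mk (fun n => Bfun c n 0)

noncomputable def Gser (c : ℕ → R) (m : ℕ) : PowerSeries R := X ^ m * (LSer c) ^ (m + 1)

lemma coeff_pow_congr {A A' : PowerSeries R} (m : ℕ) : ∀ j : ℕ,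
    (∀ k ≤ j, coeff k A = coeff k A') → coeff j (A ^ m) = coeff j (A' ^ m) := by
  induction m with
  | zero => intro j _; rfl
  | succ m ih =>
    intro j hag
    rw [pow_succ, pow_succ, coeff_mul, coeff_mul]
    apply Finset.sum_congr rfl
    intro p hp
    rw [Finset.HasAntidiagonal.mem_antidiagonal] at hp
    rw [ih p.1 (fun k hk => hag k (by omega)), hag p.2 (by omega)]

lemma coeff_XA_pow_zero (A : PowerSeries R) {j k : ℕ} (h : j < k) :
    coeff j ((X * A) ^ k) = 0 := by
  rw [mul_pow, PowerSeries.coeff_X_pow_mul', if_neg (by omega)]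

noncomputable def Eser (c : ℕ → R) (N : ℕ) : PowerSeries R :=
  LSer c - 1 - ∑ d ∈ Finset.range N, PowerSeries.C (c (d+1)) * (X * LSer c) ^ (d + 1)

lemma main_of_key (c : ℕ → R) (n : ℕ)
    (hkey : ∀ m, Bfun c n m = coeff n (Gser c m)) :
    coeff (n+1) (LSer c) =
      ∑ m ∈ Finset.range (n + 2), c m * coeff (n+1) ((X * LSer c) ^ m) := by
  rw [Finset.sum_range_succ']
  have h0 : c 0 * coeff (n+1) ((X * LSer c) ^ 0) = 0 := by
    simp [PowerSeries.coeff_one]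
  rw [h0, add_zero]
  have hL : coeff (n+1) (LSer c) = Bfun c (n+1) 0 := coeff_mk _ _
  rw [hL]
  show (∑ a ∈ Finset.range (n+1), stepW c a 0 * Bfun c n a) = _
  apply Finset.sum_congr rfl
  intro a _
  have h1 : stepW c a 0 = c (a+1) := by simp [stepW]
  rw [h1, hkey a]
  congr 1
  have hXG : (X * LSer c) ^ (a+1) = X * Gser c a := by rw [Gser, mul_pow]; ring
  rw [hXG, PowerSeries.coeff_succ_X_mul]

lemma E_vanish (c : ℕ → R) (N : ℕ)
    (hkey : ∀ k, k < N → ∀ m, Bfun c k m = coeff k (Gser c m)) :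
    ∀ j ≤ N, coeff j (Eser c N) = 0 := by
  intro j hj
  rw [Eser, map_sub, map_sub, map_sum]
  simp only [PowerSeries.coeff_C_mul]
  match j with
  | 0 =>
    have h1 : coeff 0 (LSer c) = 1 := by rw [LSer, coeff_mk]; simp [Bfun]
    rw [h1, PowerSeries.coeff_one, if_pos rfl]
    rw [Finset.sum_eq_zero (fun d _ => by rw [coeff_XA_pow_zero _ (by omega), mul_zero])]
    ring
  | (j+1) =>
    have hmain := main_of_key c j (hkey j (by omega))
    have hext : ∑ d ∈ Finset.range N, c (d+1) * coeff (j+1) ((X * LSer c) ^ (d+1))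
        = ∑ d ∈ Finset.range (j+1), c (d+1) * coeff (j+1) ((X * LSer c) ^ (d+1)) := by
      symm
      apply Finset.sum_subset (Finset.range_subset_range.mpr (by omega))
      intro d _ hd
      rw [Finset.mem_range, not_lt] at hd
      rw [coeff_XA_pow_zero _ (by omega), mul_zero]
    rw [hext, hmain, Finset.sum_range_succ']
    rw [PowerSeries.coeff_one, if_neg (by omega)]
    simp [PowerSeries.coeff_one]

lemma key (c : ℕ → R) (n : ℕ) : ∀ m, Bfun c n m = coeff n (Gser c m) := by
  induction n using Nat.strong_induction_on with
  | _ n ih =>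
    match n with
    | 0 =>
      intro m
      rw [Gser, PowerSeries.coeff_X_pow_mul']
      match m with
      | 0 => simp [Bfun, LSer]
      | (m+1) => simp [Bfun]
    | (n+1) =>
      have hkeyn : ∀ m, Bfun c n m = coeff n (Gser c m) := ih n (by omega)
      intro m
      match m with
      | 0 =>
        have hG : Gser c 0 = LSer c := by rw [Gser]; ring
        rw [hG, LSer, coeff_mk]
      | (h+1) =>
        by_cases hh : h ≤ n
        · -- main case
          have hstep : Bfun c (n+1) (h+1) = coeff n (Gser c h)
              + ∑ d ∈ Finset.range (n - h), c (d+1) * coeff n (Gser c (h+1+d)) := by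
            show (∑ a ∈ Finset.range (n+1), stepW c a (h+1) * Bfun c n a) = _
            have hpt : ∀ a ∈ Finset.range (n+1), stepW c a (h+1) * Bfun c n a
                = (if a = h then coeff n (Gser c h) else 0)
                  + (if h+1 ≤ a then c (a - h) * coeff n (Gser c a) else 0) := by
              intro a _
              rw [hkeyn a, stepW]
              rcases Nat.lt_trichotomy a h with h1 | h1 | h1
              · rw [if_neg (by omega), if_neg (by omega), if_neg (by omega), zero_mul, add_zero]
              · subst h1
                rw [if_pos (by omega), if_pos (by omega), if_pos rfl, if_neg (by omega),
                  one_mul, add_zero]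
              · rw [if_pos (by omega), if_neg (by omega), if_neg (by omega), if_pos (by omega),
                  zero_add]
                have : a - (h+1) + 1 = a - h := by omega
                rw [this]
            rw [Finset.sum_congr rfl hpt, Finset.sum_add_distrib,
              Finset.sum_ite_eq' (Finset.range (n+1)) h,
              if_pos (Finset.mem_range.mpr (by omega))]
            congr 1
            rw [← Finset.sum_filter]
            have hfil : (Finset.range (n+1)).filter (fun a => h+1 ≤ a) = Finset.Ico (h+1) (n+1) := by
              ext a; simp [Finset.mem_Ico]; omega
            rw [hfil, Finset.sum_Ico_eq_sum_range]
            have hnn : n + 1 - (h + 1) = n - h := by omega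
            rw [hnn]
            apply Finset.sum_congr rfl
            intro d _
            have : h + 1 + d - h = d + 1 := by omega
            rw [this]
          -- power series side
          have hE : ∀ j ≤ n+1, coeff j (Eser c (n+1)) = 0 :=
            E_vanish c (n+1) (fun k hk => ih k hk)
          have hGE : coeff n (Gser c h * Eser c (n+1)) = 0 := by
            rw [coeff_mul]
            apply Finset.sum_eq_zero
            intro p hp
            rw [Finset.HasAntidiagonal.mem_antidiagonal] at hp
            rw [hE p.2 (by omega), mul_zero]
          have hprod : ∀ d : ℕ, Gser c h * (X * LSer c) ^ (d+1) = Gser c (h+1+d) := by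
            intro d; rw [Gser, Gser, mul_pow]; ring
          have hLS : LSer c = 1 + (∑ d ∈ Finset.range (n+1),
              PowerSeries.C (c (d+1)) * (X * LSer c) ^ (d+1)) + Eser c (n+1) := by
            rw [Eser]; ring
          have e2 : Gser c h * LSer c = Gser c h
              + (∑ d ∈ Finset.range (n+1), PowerSeries.C (c (d+1)) * Gser c (h+1+d))
              + Gser c h * Eser c (n+1) := by
            nth_rewrite 1 [hLS]
            rw [mul_add, mul_add, mul_one, Finset.mul_sum]
            congr 2
            apply Finset.sum_congr rfl
            intro d _
            rw [← hprod d]; ring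
          have e1 : Gser c (h+1) = X * (Gser c h * LSer c) := by
            rw [Gser, Gser]; ring
          have hPS : coeff (n+1) (Gser c (h+1)) = coeff n (Gser c h)
              + ∑ d ∈ Finset.range (n+1), c (d+1) * coeff n (Gser c (h+1+d)) := by
            rw [e1, PowerSeries.coeff_succ_X_mul, e2, map_add, map_add, map_sum, hGE, add_zero]
            simp only [PowerSeries.coeff_C_mul]
          rw [hstep, hPS]
          congr 1
          apply Finset.sum_subset (Finset.range_subset_range.mpr (by omega))
          intro d _ hd2
          rw [Finset.mem_range, not_lt] at hd2
          have hz : coeff n (Gser c (h+1+d)) = 0 := by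
            rw [Gser, PowerSeries.coeff_X_pow_mul', if_neg (by omega)]
          rw [hz, mul_zero]
        · -- degenerate case h > n
          have hL : Bfun c (n+1) (h+1) = 0 := by
            show (∑ a ∈ Finset.range (n+1), stepW c a (h+1) * Bfun c n a) = 0
            apply Finset.sum_eq_zero
            intro a ha
            rw [Finset.mem_range] at ha
            rw [stepW, if_neg (by omega), zero_mul]
          rw [hL, Gser, PowerSeries.coeff_X_pow_mul', if_neg (by omega)]

lemma main_id (c : ℕ → R) (n : ℕ) (hn : 1 ≤ n) :
    coeff n (LSer c) = ∑ m ∈ Finset.range (n + 1), c m * coeff n ((X * LSer c) ^ m) := by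
  obtain ⟨n, rfl⟩ : ∃ k, n = k + 1 := ⟨n - 1, by omega⟩
  exact main_of_key c n (key c n)

end Aux

/-- Let `M(z) = 1 + ∑ μ_n z^n` and `C(z) = 1 + ∑ c_n z^n` with `C(zM(z)) = M(z)`
(the composition is expressed coefficient-wise; since `zM(z)` has zero constant term,
the coefficient of `z^n` in `C(zM(z))` is the finite sum `∑_{m=0}^n c_m [z^n](zM(z))^m`).
Then `μ_n` is the weighted sum over Łukasiewicz paths of length `n` with weight `1` on
rising steps and `c_{k+1}` on steps falling by `k ≥ 0`. -/
theorem moments_eq_lukasiewicz_sum_of_free_cumulants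
    {R : Type*} [CommRing R] [Algebra ℚ R] (M C : PowerSeries R)
    (hM0 : constantCoeff M = 1) (hC0 : constantCoeff C = 1)
    (hcomp : ∀ n : ℕ, coeff n M =
      ∑ m ∈ Finset.range (n + 1), coeff m C * coeff n ((X * M) ^ m)) :
    ∀ n : ℕ, 1 ≤ n →
      coeff n M = ∑ f ∈ lukasiewiczSet n, lukasiewiczVal (fun k => coeff k C) f := by
  set c : ℕ → R := fun k => coeff k C with hc
  have hagree : ∀ n : ℕ, coeff n M = coeff n (LSer c) := by
    intro n
    induction n using Nat.strong_induction_on with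
    | _ n ih =>
      match n with
      | 0 =>
        rw [LSer, coeff_mk]
        show coeff 0 M = Bfun c 0 0
        rw [coeff_zero_eq_constantCoeff, hM0]; simp [Bfun]
      | Nat.succ n =>
        rw [hcomp (n+1), main_id c (n+1) (by omega)]
        apply Finset.sum_congr rfl
        intro m hm
        rw [Finset.mem_range] at hm
        congr 1
        match m with
        | 0 => simp
        | Nat.succ m =>
          rw [mul_pow, mul_pow]
          rw [PowerSeries.coeff_X_pow_mul', PowerSeries.coeff_X_pow_mul']
          have hle : m + 1 ≤ n + 1 := by omega
          rw [if_pos hle, if_pos hle]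
          exact coeff_pow_congr _ _ (fun k hk => ih k (by omega))
  intro n hn
  rw [hagree n, LSer, coeff_mk, ← pathSum c n 0]
  have hset : lukasiewiczSet n = pathSet n 0 := by
    unfold lukasiewiczSet pathSet
    apply Finset.filter_congr
    intro f _
    constructor
    · rintro ⟨h0, hl, hs⟩
      exact ⟨h0, by rw [hl]; rfl, hs⟩
    · rintro ⟨h0, hl, hs⟩
      exact ⟨h0, Fin.ext hl, hs⟩
  rw [hset]
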